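/- arXiv:2201.11863 — 2 statements merged into one kernel-verified Lean document; each statement's English description precedes it below -/
import Mathlib

section
/- Let l ≥ 2 and let n be a positive integer. If the de Bruijn graph G_l contains a balanced directed circuit of length n, then the de Bruijn graph G_{l+1} contains a balanced directed cycle of length n (a closed directed trail of n edges in which no vertex other than the initial/final one is repeated, with equally many red and blue edges). -/
/-- Source of an edge of the de Bruijn graph `G_l`: the first `l-1` bits. -/
def dbSrc (l : ℕ) (e : Fin l → Bool) : Fin (l - 1) → Bool :=
  fun j => e (Fin.castLE (Nat.sub_le l 1) j)

/-- Target of an edge of the de Bruijn graph `G_l`: the last `l-1` bits. -/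
def dbTgt (l : ℕ) (e : Fin l → Bool) : Fin (l - 1) → Bool :=
  fun j => e ⟨j.val + 1, by have := j.isLt; omega⟩

/-- `es` is a directed walk in `G_l` from `v` to `v'`: a nonempty list of
edges, consecutive edges compatible, starting at `v` and ending at `v'`. -/
def IsDBWalk (l : ℕ) (v v' : Fin (l - 1) → Bool) (es : List (Fin l → Bool)) : Prop :=
  es.Chain' (fun e e' => dbTgt l e = dbSrc l e') ∧
  es.head?.map (dbSrc l) = some v ∧
  es.getLast?.map (dbTgt l) = some v'

/-- `es` is a directed circuit (closed trail, no repeated edge) in `G_l`. -/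
def IsDBCircuit (l : ℕ) (es : List (Fin l → Bool)) : Prop :=
  ∃ v, IsDBWalk l v v es ∧ es.Nodup

/-- The last bit of an edge of `G_l` (the edge is red if this is `false`,
blue if it is `true`). -/
def dbLastBit (l : ℕ) (hl : 0 < l) (e : Fin l → Bool) : Bool :=
  e ⟨l - 1, by omega⟩

/-- An edge list is balanced if it has equally many red edges (last bit `false`)
and blue edges (last bit `true`). -/
def IsBalancedEdgeList (l : ℕ) (hl : 0 < l) (es : List (Fin l → Bool)) : Prop :=
  es.countP (fun e => !dbLastBit l hl e) = es.countP (fun e => dbLastBit l hl e)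

/-!
`G_{l+1}` is the line graph of `G_l`: the edge `b₀ ⋯ b_l` joins the consecutive edges
`b₀ ⋯ b_{l-1}` and `b₁ ⋯ b_l`. Along a circuit `e₀ ⋯ e_{n-1}` of `G_l` the pairs `(eᵢ, eᵢ₊₁)`,
indices mod `n`, form a closed walk of `G_{l+1}` whose vertices are the distinct edges `eᵢ`, i.e. a
cycle; its colours are those of `e₁, …, e_{n-1}, e₀`, a rotation of the original ones.
-/

-- For consecutive edges `e`, `e'` of `G_l`, this is the edge of `G_{l+1}` from `e` to `e'`.
def dbJoin (l : ℕ) (hl : 0 < l) (e e' : Fin l → Bool) : Fin (l + 1) → Bool :=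
  Fin.snoc e (dbLastBit l hl e')

section Join

variable {l : ℕ} (hl : 0 < l)

@[simp]
lemma dbSrc_dbJoin (e e' : Fin l → Bool) : dbSrc (l + 1) (dbJoin l hl e e') = e := by
  funext j
  exact Fin.snoc_castSucc (α := fun _ => Bool) (i := j) ..

@[simp]
lemma dbLastBit_dbJoin (e e' : Fin l → Bool) :
    dbLastBit (l + 1) l.succ_pos (dbJoin l hl e e') = dbLastBit l hl e' :=
  Fin.snoc_last (α := fun _ => Bool) ..

lemma dbTgt_dbJoin {e e' : Fin l → Bool} (h : dbTgt l e = dbSrc l e') :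
    dbTgt (l + 1) (dbJoin l hl e e') = e' := by
  funext ⟨j, hj⟩
  by_cases hjl : j + 1 < l
  · simp only [dbTgt, dbJoin, Fin.snoc, hjl, dite_true]
    exact congrFun h ⟨j, by omega⟩
  · obtain rfl : j = l - 1 := by omega
    simp [dbTgt, dbJoin, dbLastBit, Fin.snoc, hjl]

end Join

section Walk

variable {l : ℕ} {v w : Fin (l - 1) → Bool} {e e' : Fin l → Bool} {es : List (Fin l → Bool)}

lemma IsDBWalk.ne_nil (h : IsDBWalk l v w es) : es ≠ [] := by
  rintro rfl
  simp [IsDBWalk] at h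

lemma IsDBWalk.dbSrc_head (h : IsDBWalk l v w (e :: es)) : dbSrc l e = v := by
  simpa using h.2.1

lemma isDBWalk_singleton : IsDBWalk l v w [e] ↔ dbSrc l e = v ∧ dbTgt l e = w := by
  simp [IsDBWalk, List.Chain']

lemma isDBWalk_cons_cons :
    IsDBWalk l v w (e :: e' :: es) ↔
      dbSrc l e = v ∧ dbTgt l e = dbSrc l e' ∧ IsDBWalk l (dbSrc l e') w (e' :: es) := by
  simp only [IsDBWalk, List.Chain', List.isChain_cons_cons, List.head?_cons, Option.map_some,
    Option.some.injEq, List.getLast?_cons_cons]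
  tauto

lemma IsDBWalk.cons (h : IsDBWalk l (dbTgt l e) w es) : IsDBWalk l (dbSrc l e) w (e :: es) := by
  obtain ⟨e', es, rfl⟩ := List.exists_cons_of_ne_nil h.ne_nil
  exact isDBWalk_cons_cons.2 ⟨rfl, h.dbSrc_head.symm, h.dbSrc_head ▸ h⟩

end Walk

-- The walk `e₀ ⋯ eₖ` followed by the edge `f` becomes the walk `(e₀e₁) ⋯ (eₖf)` of `G_{l+1}`.
def dbLiftWalk (l : ℕ) (hl : 0 < l) (f : Fin l → Bool) :
    List (Fin l → Bool) → List (Fin (l + 1) → Bool)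
  | [] => []
  | [e] => [dbJoin l hl e f]
  | e :: e' :: es => dbJoin l hl e e' :: dbLiftWalk l hl f (e' :: es)

section Lift

variable {l : ℕ} (hl : 0 < l) (f : Fin l → Bool)

@[simp]
lemma map_dbSrc_dbLiftWalk (es : List (Fin l → Bool)) :
    (dbLiftWalk l hl f es).map (dbSrc (l + 1)) = es := by
  fun_induction dbLiftWalk l hl f es <;> simp_all

lemma map_dbLastBit_dbLiftWalk (e : Fin l → Bool) (es : List (Fin l → Bool)) :
    (dbLiftWalk l hl f (e :: es)).map (dbLastBit (l + 1) l.succ_pos) =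
      (es ++ [f]).map (dbLastBit l hl) := by
  induction es generalizing e with
  | nil => simp [dbLiftWalk]
  | cons e' es ih => simp [dbLiftWalk, ih]

lemma isDBWalk_dbLiftWalk {v : Fin (l - 1) → Bool} {e : Fin l → Bool} {es : List (Fin l → Bool)}
    (h : IsDBWalk l v (dbSrc l f) (e :: es)) :
    IsDBWalk (l + 1) e f (dbLiftWalk l hl f (e :: es)) := by
  induction es generalizing v e with
  | nil =>
    rw [isDBWalk_singleton] at h
    exact isDBWalk_singleton.2 ⟨dbSrc_dbJoin hl e f, dbTgt_dbJoin hl h.2⟩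
  | cons e' es ih =>
    rw [isDBWalk_cons_cons] at h
    have hcons := IsDBWalk.cons (e := dbJoin l hl e e')
      (by rw [dbTgt_dbJoin hl h.2.1]; exact ih h.2.2)
    rwa [dbSrc_dbJoin, ← dbLiftWalk] at hcons

end Lift

lemma IsBalancedEdgeList.of_perm_map_dbLastBit {l l' : ℕ} {hl : 0 < l} {hl' : 0 < l'}
    {es : List (Fin l → Bool)} {es' : List (Fin l' → Bool)}
    (hp : (es'.map (dbLastBit l' hl')).Perm (es.map (dbLastBit l hl)))
    (h : IsBalancedEdgeList l hl es) : IsBalancedEdgeList l' hl' es' := by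
  have hcount (p : Bool → Bool) :
      es'.countP (p ∘ dbLastBit l' hl') = es.countP (p ∘ dbLastBit l hl) := by
    simpa only [List.countP_map] using hp.countP_eq p
  exact (hcount (!·)).trans (h.trans (hcount id).symm)

/-- If `G_l` contains a balanced directed circuit of length `n`, then `G_{l+1}`
contains a balanced directed cycle of length `n` (a closed directed trail of
`n` edges in which no vertex other than the initial/final one is repeated). -/
theorem balanced_circuit_to_balanced_cycle (l n : ℕ) (hl : 2 ≤ l)
    (h : ∃ es : List (Fin l → Bool),
        IsDBCircuit l es ∧ es.length = n ∧ IsBalancedEdgeList l (by omega) es) :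
    ∃ es : List (Fin (l + 1) → Bool),
      IsDBCircuit (l + 1) es ∧ (es.map (dbSrc (l + 1))).Nodup ∧
      es.length = n ∧ IsBalancedEdgeList (l + 1) (by omega) es := by
  obtain ⟨es, ⟨v, hwalk, hnodup⟩, rfl, hbal⟩ := h
  obtain ⟨e, es, rfl⟩ := List.exists_cons_of_ne_nil hwalk.ne_nil
  have hl₀ : 0 < l := by omega
  have hsrc := map_dbSrc_dbLiftWalk hl₀ e (e :: es)
  refine ⟨dbLiftWalk l hl₀ e (e :: es), ⟨e, ?_, ?_⟩, ?_, ?_, ?_⟩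
  · exact isDBWalk_dbLiftWalk hl₀ e (hwalk.dbSrc_head ▸ hwalk)
  · exact List.Nodup.of_map _ (by rwa [hsrc])
  · rwa [hsrc]
  · simpa using congrArg List.length hsrc
  · refine hbal.of_perm_map_dbLastBit ?_
    rw [map_dbLastBit_dbLiftWalk]
    exact (List.perm_append_singleton e es).map _
end

section
/- Let n, l, k be positive integers with l ≥ 2. If there exists a balanced generalized de Bruijn sequence with parameters (n, l, k), then there exists a balanced generalized de Bruijn sequence with parameters (n + 2^l, l, k + 1). -/
/-- The number of cyclic occurrences of the word `w : Fin l → Bool` in the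
cyclic binary sequence `s : ZMod n → Bool`. -/
noncomputable def occCount (n l : ℕ) (s : ZMod n → Bool) (w : Fin l → Bool) : ℕ :=
  Nat.card {i : ZMod n // ∀ j : Fin l, s (i + ((j : ℕ) : ZMod n)) = w j}

/-- `s` is a generalized de Bruijn sequence with parameters `(n, l, k)`:
every binary word of length `l` occurs at most `k` times as a cyclic substring. -/
def IsGenDeBruijn (n l k : ℕ) (s : ZMod n → Bool) : Prop :=
  ∀ w : Fin l → Bool, occCount n l s w ≤ k

/-- `s` is balanced: it takes the values `false` and `true` equally often. -/
def IsBalancedSeq (n : ℕ) (s : ZMod n → Bool) : Prop :=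
  Nat.card {i : ZMod n // s i = false} = Nat.card {i : ZMod n // s i = true}


/-!
Rotate a binary de Bruijn sequence `D` of order `l` (each word of length `l` is exactly one of
its `2 ^ l` cyclic windows) so that its first `l - 1` letters agree with those of `s`. In the
cyclic concatenation `s ++ D`, a window crossing a junction reads the same letters as the window of
the factor it starts in, so every word occurs at most `k + 1` times; and `s ++ D` is balanced since
`s` and `D` are.

De Bruijn sequences of every order `l ≥ 2` come from Lempel's lifting. A de Bruijn sequence `s` of
order `l` has `2 ^ (l - 1)` ones, an even number, so `s i = t (i + 1) - t i` for a cyclic `t` (in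
`Bool` viewed as the field with two elements). Difference windows of `t` are windows of `s`, so the
`2 ^ (l + 1)` windows of length `l + 1` of `t` and of `t + 1` are distinct, i.e. all words. At an
occurrence `p` of `1 ^ l` in `s`, `t` flips `l` times in a row, so `t` at `p + 1` and `t + 1` at
`p` start with the same `l` letters, and the two cycles can be joined there.
-/

open Finset Function

namespace CyclicSeq

variable {α : Type*}

def window {m : ℕ} (L : ℕ) (s : ZMod m → α) (i : ZMod m) : Fin L → α :=
  fun j => s (i + (j : ℕ))

theorem window_comp_add {m L : ℕ} (s : ZMod m → α) (j : ZMod m) :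
    window L (fun i => s (j + i)) = window L s ∘ (j + ·) := by
  funext i c
  simp [window, add_assoc]

theorem occCount_eq_card_window {n l : ℕ} (s : ZMod n → Bool) (w : Fin l → Bool) :
    occCount n l s w = Nat.card {i // window l s i = w} :=
  Nat.card_congr (Equiv.subtypeEquivRight fun _ => funext_iff.symm)

def IsDeBruijn {m : ℕ} (L : ℕ) (s : ZMod m → α) : Prop :=
  Bijective (window L s)

namespace IsDeBruijn

variable {m L : ℕ} {s : ZMod m → α}

theorem card_window_eq_one (hs : IsDeBruijn L s) (w : Fin L → α) :
    Nat.card {i // window L s i = w} = 1 := by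
  obtain ⟨i, hi, huniq⟩ := (bijective_iff_existsUnique _).1 hs w
  have : Unique {i // window L s i = w} := ⟨⟨⟨i, hi⟩⟩, fun j => Subtype.ext (huniq j j.2)⟩
  exact Nat.card_unique

theorem rotate (hs : IsDeBruijn L s) (j : ZMod m) : IsDeBruijn L (fun i => s (j + i)) := by
  rw [IsDeBruijn, window_comp_add]
  exact hs.comp (AddGroup.addLeft_bijective j)

theorem card_eq_card (hs : IsDeBruijn L s) (hL : 0 < L) (v v' : α) :
    Nat.card {i // s i = v} = Nat.card {i // s i = v'} := by
  classical
  unfold IsDeBruijn at hs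
  have hfirst (v : α) : Nat.card {i // s i = v} = Nat.card {w : Fin L → α // w ⟨0, hL⟩ = v} :=
    Nat.card_congr (Equiv.subtypeEquiv (Equiv.ofBijective _ hs) fun i => by simp [window])
  rw [hfirst, hfirst]
  exact Nat.card_congr (Equiv.subtypeEquiv (Equiv.piCongrRight fun _ => Equiv.swap v v')
    fun w => by simp [Equiv.swap_apply_eq_iff])

end IsDeBruijn

section Append

variable {m m' : ℕ}

def append (a : ZMod m → α) (b : ZMod m' → α) : ZMod (m + m') → α :=
  fun p => if p.val < m then a p.val else b (p.val - m : ℕ)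

def appendIndex (m m' : ℕ) : ZMod m ⊕ ZMod m' → ZMod (m + m') :=
  Sum.elim (fun x => (x.val : ZMod (m + m'))) (fun y => ((m + y.val : ℕ) : ZMod (m + m')))

variable (a : ZMod m → α) (b : ZMod m' → α)

theorem append_natCast_of_lt {x : ℕ} (hx : x < m) : append a b x = a x := by
  unfold append
  rw [ZMod.val_cast_of_lt (by omega), if_pos hx]

theorem append_natCast_add {y : ℕ} (hy : y < m') : append a b ((m + y : ℕ)) = b y := by
  unfold append
  rw [ZMod.val_cast_of_lt (by omega), if_neg (by omega), Nat.add_sub_cancel_left]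

variable {L : ℕ} {a b}

theorem append_natCast_of_lt_add (hL : L ≤ m' + 1) (hab : ∀ c : ℕ, c + 1 < L → a c = b c)
    {y : ℕ} (hy : y < m + (L - 1)) : append a b y = a y := by
  rcases lt_or_ge y m with h | h
  · exact append_natCast_of_lt a b h
  · obtain ⟨r, rfl⟩ := Nat.exists_eq_add_of_le h
    rw [append_natCast_add a b (by omega), ← hab r (by omega)]
    simp

theorem append_natCast_add_of_lt (hL : L ≤ m' + 1) (hab : ∀ c : ℕ, c + 1 < L → a c = b c)
    {y : ℕ} (hy : y < m' + (L - 1)) : append a b ((m + y : ℕ)) = b y := by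
  rcases lt_or_ge y m' with h | h
  · exact append_natCast_add a b h
  · obtain ⟨r, rfl⟩ := Nat.exists_eq_add_of_le h
    have hr : ((m + (m' + r) : ℕ) : ZMod (m + m')) = r := by
      rw [← add_assoc, Nat.cast_add, ZMod.natCast_self, zero_add]
    rw [hr, append_natCast_of_lt_add hL hab (by omega), hab r (by omega)]
    simp

variable [NeZero m] [NeZero m']

theorem bijective_appendIndex : Bijective (appendIndex m m') := by
  rw [Fintype.bijective_iff_injective_and_card]
  refine ⟨?_, by simp [ZMod.card]⟩
  have hval (x : ZMod m ⊕ ZMod m') :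
      (appendIndex m m' x).val = Sum.elim ZMod.val (fun y => m + y.val) x := by
    rcases x with x | y
    · exact ZMod.val_cast_of_lt (by have := x.val_lt; omega)
    · exact ZMod.val_cast_of_lt (by have := y.val_lt; omega)
  intro x y hxy
  have h := congrArg ZMod.val hxy
  rw [hval, hval] at h
  rcases x with x | x <;> rcases y with y | y <;> simp only [Sum.elim_inl, Sum.elim_inr] at h
  · rw [ZMod.val_injective _ h]
  · have := x.val_lt; omega
  · have := y.val_lt; omega
  · rw [ZMod.val_injective _ (Nat.add_left_cancel h)]

theorem card_subtype_append (p : ZMod (m + m') → Prop) :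
    Nat.card {x // p x} = Nat.card {x // p (appendIndex m m' (.inl x))} +
      Nat.card {y // p (appendIndex m m' (.inr y))} := by
  rw [← Nat.card_sum]
  exact Nat.card_congr ((Equiv.subtypeEquivOfSubtype
    (Equiv.ofBijective _ bijective_appendIndex)).symm.trans Equiv.subtypeSum)

theorem append_comp_appendIndex : append a b ∘ appendIndex m m' = Sum.elim a b := by
  funext x
  rcases x with x | y
  · simpa [appendIndex] using append_natCast_of_lt a b x.val_lt
  · simpa [appendIndex] using append_natCast_add a b y.val_lt

theorem card_append_eq (v : α) :
    Nat.card {p // append a b p = v} = Nat.card {x // a x = v} + Nat.card {y // b y = v} := by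
  rw [card_subtype_append]
  simp only [← comp_apply (f := append a b), append_comp_appendIndex, Sum.elim_inl, Sum.elim_inr]

theorem window_append_comp_appendIndex (hL : L ≤ m' + 1)
    (hab : ∀ c : ℕ, c + 1 < L → a c = b c) :
    window L (append a b) ∘ appendIndex m m' = Sum.elim (window L a) (window L b) := by
  funext x c
  have hc := c.isLt
  rcases x with x | y
  · have := append_natCast_of_lt_add hL hab (y := x.val + c) (by have := x.val_lt; omega)
    simpa [window, appendIndex] using this
  · have := append_natCast_add_of_lt hL hab (y := y.val + c) (by have := y.val_lt; omega)
    simpa [window, appendIndex, add_assoc] using this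

theorem card_window_append (hL : L ≤ m' + 1) (hab : ∀ c : ℕ, c + 1 < L → a c = b c)
    (w : Fin L → α) :
    Nat.card {p // window L (append a b) p = w} =
      Nat.card {x // window L a x = w} + Nat.card {y // window L b y = w} := by
  rw [card_subtype_append]
  simp only [← comp_apply (f := window L (append a b)), window_append_comp_appendIndex hL hab,
    Sum.elim_inl, Sum.elim_inr]

end Append

theorem exists_add_one_eq_add_of_sum_eq_zero {G : Type*} [AddCommGroup G] {N : ℕ} [NeZero N]
    {s : ZMod N → G} (hs : ∑ i, s i = 0) : ∃ t : ZMod N → G, ∀ i, t (i + 1) = t i + s i := by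
  have hrange : ∑ r ∈ range N, s r = 0 := by
    rw [← hs]
    exact sum_nbij' (fun r => (r : ZMod N)) ZMod.val (by simp) (by simp [ZMod.val_lt])
      (fun r hr => ZMod.val_cast_of_lt (mem_range.1 hr)) (fun i _ => ZMod.natCast_zmod_val i)
      (fun _ _ => rfl)
  refine ⟨fun i => ∑ r ∈ range i.val, s r, fun i => ?_⟩
  have hsi : s i = s (i.val : ZMod N) := by rw [ZMod.natCast_zmod_val]
  have hi : i + 1 = ((i.val + 1 : ℕ) : ZMod N) := by push_cast [ZMod.natCast_zmod_val]; rfl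
  dsimp only
  rw [hi, ZMod.val_natCast, hsi, ← sum_range_succ]
  rcases (show i.val + 1 ≤ N from i.val_lt).lt_or_eq with h | h
  · rw [Nat.mod_eq_of_lt h]
  · rw [h, Nat.mod_self, range_zero, sum_empty, hrange]

theorem injective_window_translates {G : Type*} [AddCommGroup G] {N L : ℕ} {s t : ZMod N → G}
    (hs : Injective (window L s)) (ht : ∀ i, t (i + 1) = t i + s i) :
    Injective fun xi : G × ZMod N => window (L + 1) (fun r => t r + xi.1) xi.2 := by
  rintro ⟨x, i⟩ ⟨x', i'⟩ h
  have hwin (c : ℕ) (hc : c < L + 1) : t (i + c) + x = t (i' + c) + x' :=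
    congrFun h ⟨c, hc⟩
  obtain rfl : i = i' := hs <| funext fun c => by
    have h1 := hwin (c + 1) (by omega)
    have h0 := hwin c (by omega)
    simp only [Nat.cast_add, Nat.cast_one, ← add_assoc, ht] at h1
    calc s (i + c) = (t (i + c) + s (i + c) + x) - (t (i + c) + x) := by abel
      _ = (t (i' + c) + s (i' + c) + x') - (t (i' + c) + x') := by rw [h1, h0]
      _ = s (i' + c) := by abel
  simpa using hwin 0 (by omega)

theorem sum_bool_eq_natCast_card {ι : Type*} [Fintype ι] (f : ι → Bool) :
    ∑ i, f i = (Nat.card {i // f i = true} : Bool) := by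
  classical
  rw [Nat.card_eq_fintype_card, Fintype.card_subtype, ← sum_boole]
  refine sum_congr rfl fun i _ => ?_
  cases f i <;> rfl

namespace IsDeBruijn

theorem two_mul_card_true {N L : ℕ} [NeZero N] {s : ZMod N → Bool} (hs : IsDeBruijn L s)
    (hL : 0 < L) : 2 * Nat.card {i // s i = true} = N := by
  have htotal : Nat.card {i // s i = false} + Nat.card {i // s i = true} = N := by
    rw [← Nat.card_sum]
    exact (Nat.card_congr ((Equiv.sumCongr (Equiv.refl _)
      (Equiv.subtypeEquivRight fun _ => by simp)).trans (Equiv.sumCompl _))).trans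
      (Nat.card_zmod N)
  rw [hs.card_eq_card hL false true] at htotal
  omega

theorem sum_eq_zero {l : ℕ} (hl : 2 ≤ l) {s : ZMod (2 ^ l) → Bool} (hs : IsDeBruijn l s) :
    ∑ i, s i = 0 := by
  have hcard := hs.two_mul_card_true (by omega)
  have hcard' : Nat.card {i // s i = true} = 2 * 2 ^ (l - 2) := by
    have hpow : 2 ^ l = 2 * (2 * 2 ^ (l - 2)) := by
      rw [← pow_succ', ← pow_succ']
      congr 1
      omega
    omega
  rw [sum_bool_eq_natCast_card, hcard', Nat.cast_mul]
  exact zero_mul _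

theorem exists_succ {l : ℕ} (hl : 2 ≤ l) {s : ZMod (2 ^ l) → Bool} (hs : IsDeBruijn l s) :
    ∃ D : ZMod (2 ^ (l + 1)) → Bool, IsDeBruijn (l + 1) D := by
  obtain ⟨t, ht⟩ := exists_add_one_eq_add_of_sum_eq_zero (hs.sum_eq_zero hl)
  obtain ⟨p, hp⟩ := hs.2 fun _ => true
  set a : ZMod (2 ^ l) → Bool := fun i => t (p + 1 + i)
  set b : ZMod (2 ^ l) → Bool := fun i => t (p + i) + 1
  have hab (c : ℕ) (hc : c + 1 < l + 1) : a c = b c := by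
    simp only [a, b, add_right_comm p 1, ht]
    exact congrArg _ (congrFun hp ⟨c, by omega⟩)
  have hL : l + 1 ≤ 2 ^ l + 1 := by have := l.lt_two_pow_self; omega
  have htranslates : Bijective fun xi : Bool × ZMod (2 ^ l) =>
      window (l + 1) (fun r => t r + xi.1) xi.2 := by
    rw [Fintype.bijective_iff_injective_and_card]
    exact ⟨injective_window_translates hs.1 ht, by simp [ZMod.card, pow_succ, mul_comm]⟩
  let e : ZMod (2 ^ l) ⊕ ZMod (2 ^ l) ≃ Bool × ZMod (2 ^ l) :=
    (Equiv.sumCongr (Equiv.addLeft (p + 1)) (Equiv.addLeft p)).trans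
      (Equiv.boolProdEquivSum _).symm
  have hwin : Sum.elim (window (l + 1) a) (window (l + 1) b) =
      (fun xi : Bool × ZMod (2 ^ l) => window (l + 1) (fun r => t r + xi.1) xi.2) ∘ e := by
    funext x c
    rcases x with i | i <;>
      simp [e, a, b, window, add_assoc, Bool.zero_eq_false, Bool.one_eq_true]
  rw [pow_succ, mul_two]
  refine ⟨append a b, ?_⟩
  rw [IsDeBruijn, ← Bijective.of_comp_iff _ bijective_appendIndex,
    window_append_comp_appendIndex hL hab, hwin]
  exact htranslates.comp e.bijective

end IsDeBruijn

theorem exists_isDeBruijn {l : ℕ} (hl : 2 ≤ l) : ∃ D : ZMod (2 ^ l) → Bool, IsDeBruijn l D := by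
  induction l, hl using Nat.le_induction with
  | base => exact ⟨![false, false, true, true], by unfold IsDeBruijn; decide⟩
  | succ l hl ih =>
    obtain ⟨s, hs⟩ := ih
    exact hs.exists_succ hl

end CyclicSeq

open CyclicSeq

theorem balanced_genDeBruijn_step_general (n l k : ℕ) (hn : 0 < n) (hl : 2 ≤ l)
    (h : ∃ s : ZMod n → Bool, IsGenDeBruijn n l k s ∧ IsBalancedSeq n s) :
    ∃ s : ZMod (n + 2 ^ l) → Bool,
      IsGenDeBruijn (n + 2 ^ l) l (k + 1) s ∧ IsBalancedSeq (n + 2 ^ l) s := by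
  obtain ⟨s, hs, hbal⟩ := h
  have : NeZero n := ⟨hn.ne'⟩
  obtain ⟨D, hD⟩ := exists_isDeBruijn hl
  obtain ⟨j, hj⟩ := hD.2 (window l s 0)
  have hagree (c : ℕ) (hc : c + 1 < l) : s c = D (j + c) := by
    simpa [window] using (congrFun hj ⟨c, by omega⟩).symm
  have hL : l ≤ 2 ^ l + 1 := by have := l.lt_two_pow_self; omega
  refine ⟨append s (fun i => D (j + i)), fun w => ?_, ?_⟩
  · rw [occCount_eq_card_window, card_window_append hL hagree,
      (hD.rotate j).card_window_eq_one, ← occCount_eq_card_window]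
    exact Nat.add_le_add_right (hs w) 1
  · rw [IsBalancedSeq, card_append_eq, card_append_eq, hbal,
      (hD.rotate j).card_eq_card (by omega) false true]

/-- If a balanced generalized de Bruijn sequence with parameters `(n, l, k)`
exists, then one with parameters `(n + 2^l, l, k + 1)` exists. -/
theorem balanced_genDeBruijn_step (n l k : ℕ) (hn : 0 < n) (hl : 2 ≤ l) (hk : 0 < k)
    (h : ∃ s : ZMod n → Bool, IsGenDeBruijn n l k s ∧ IsBalancedSeq n s) :
    ∃ s : ZMod (n + 2 ^ l) → Bool,
      IsGenDeBruijn (n + 2 ^ l) l (k + 1) s ∧ IsBalancedSeq (n + 2 ^ l) s :=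
  balanced_genDeBruijn_step_general n l k hn hl h
end
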